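/- arXiv:2509.17101 — 2 statements merged into one kernel-verified Lean document; each statement's English description precedes it below -/
import Mathlib

section
/- Let W be a d×d positive definite Hermitian complex matrix and E a d×d positive definite Hermitian complex matrix. The function W ↦ Re(trace(W·E)) − Real.log (det W).re, restricted to positive definite Hermitian W, is uniquely minimized at W = E⁻¹, with minimum value d + Real.log (det E).re. -/
open Matrix
open scoped ComplexOrder

/-!
Write `E = R⋆ R` with `R` invertible and put `S = R W R⋆`, which is positive definite. Then
`tr (W E) - log det W = (tr S - log det S) + log det E`, and `tr S - log det S = ∑ (λᵢ - log λᵢ)`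
over the eigenvalues of `S`. Since `log x ≤ x - 1`, each term is at least `1`, with equality only
at `λᵢ = 1`; so the objective is at least `d + log det E`, with equality iff `S = 1`, that is,
iff `W = (R⋆ R)⁻¹ = E⁻¹`.
-/

theorem Real.one_le_sub_log {x : ℝ} (hx : 0 < x) : 1 ≤ x - Real.log x := by
  linarith [Real.log_le_sub_one_of_pos hx]

theorem Real.one_lt_sub_log {x : ℝ} (hx : 0 < x) (hx1 : x ≠ 1) : 1 < x - Real.log x := by
  linarith [Real.log_lt_sub_one_of_pos hx hx1]

theorem Complex.log_re_mul_of_pos {a b : ℂ} (ha : 0 < a) (hb : 0 < b) :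
    Real.log (a * b).re = Real.log a.re + Real.log b.re := by
  rw [Complex.lt_def] at ha hb
  rw [Complex.mul_re, ← ha.2, Complex.zero_im, zero_mul, sub_zero,
    Real.log_mul ha.1.ne' hb.1.ne']

namespace Matrix

variable {n : Type*} [Fintype n] [DecidableEq n]

theorem IsHermitian.eq_one_of_eigenvalues_eq_one {S : Matrix n n ℂ} (hS : S.IsHermitian)
    (h : ∀ i, hS.eigenvalues i = 1) : S = 1 := by
  refine CFC.eq_one_of_spectrum_subset_one (R := ℝ) S ?_ hS
  rw [hS.spectrum_real_eq_range_eigenvalues]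
  rintro _ ⟨i, rfl⟩
  exact h i

theorem PosDef.trace_re_sub_log_det_re_eq_sum {S : Matrix n n ℂ} (hS : S.PosDef) :
    S.trace.re - Real.log S.det.re =
      ∑ i, (hS.1.eigenvalues i - Real.log (hS.1.eigenvalues i)) := by
  rw [hS.1.trace_eq_sum_eigenvalues, hS.1.det_eq_prod_eigenvalues, ← RCLike.ofReal_sum,
    ← RCLike.ofReal_prod]
  simp only [Complex.coe_algebraMap, Complex.ofReal_re]
  rw [Real.log_prod fun i _ => (hS.eigenvalues_pos i).ne', ← Finset.sum_sub_distrib]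

theorem PosDef.card_le_trace_re_sub_log_det_re {S : Matrix n n ℂ} (hS : S.PosDef) :
    (Fintype.card n : ℝ) ≤ S.trace.re - Real.log S.det.re := by
  rw [hS.trace_re_sub_log_det_re_eq_sum, Fintype.card_eq_sum_ones, Nat.cast_sum, Nat.cast_one]
  exact Finset.sum_le_sum fun i _ => Real.one_le_sub_log (hS.eigenvalues_pos i)

theorem PosDef.eq_one_of_trace_re_sub_log_det_re_eq_card {S : Matrix n n ℂ} (hS : S.PosDef)
    (h : S.trace.re - Real.log S.det.re = Fintype.card n) : S = 1 := by
  rw [hS.trace_re_sub_log_det_re_eq_sum, Fintype.card_eq_sum_ones, Nat.cast_sum, Nat.cast_one,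
    eq_comm, Finset.sum_eq_sum_iff_of_le fun i _ => Real.one_le_sub_log (hS.eigenvalues_pos i)] at h
  refine hS.1.eq_one_of_eigenvalues_eq_one fun i => ?_
  by_contra hi
  exact (Real.one_lt_sub_log (hS.eigenvalues_pos i) hi).ne (h i (Finset.mem_univ i))

theorem PosDef.exists_isUnit_eq_star_mul_self {E : Matrix n n ℂ} (hE : E.PosDef) :
    ∃ R : Matrix n n ℂ, IsUnit R ∧ E = star R * R := by
  open scoped MatrixOrder in exact
    CStarAlgebra.isStrictlyPositive_iff_eq_star_mul_self.mp hE.isStrictlyPositive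

theorem PosDef.trace_mul_re_sub_log_det_re_eq {R W : Matrix n n ℂ} (hE : (star R * R).PosDef)
    (hW : W.PosDef) :
    (W * (star R * R)).trace.re - Real.log W.det.re =
      (R * W * star R).trace.re - Real.log (R * W * star R).det.re
        + Real.log (star R * R).det.re := by
  have htrace : (R * W * star R).trace = (W * (star R * R)).trace := by
    rw [trace_mul_cycle, trace_mul_comm]
  have hdet : (R * W * star R).det = (star R * R).det * W.det := by
    simp only [det_mul]
    ring
  rw [htrace, hdet, Complex.log_re_mul_of_pos hE.det_pos hW.det_pos]
  ring

theorem mul_inv_star_mul_self_mul_star {R : Matrix n n ℂ} (hR : IsUnit R) :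
    R * (star R * R)⁻¹ * star R = 1 := by
  rw [mul_assoc, mul_eq_one_comm, mul_assoc,
    nonsing_inv_mul _ ((isUnit_iff_isUnit_det _).1 (hR.star.mul hR))]

theorem eq_inv_star_mul_self_of_mul_mul_star_eq_one {R W : Matrix n n ℂ}
    (h : R * W * star R = 1) : W = (star R * R)⁻¹ := by
  rw [mul_assoc, mul_eq_one_comm, mul_assoc] at h
  exact (inv_eq_left_inv h).symm

end Matrix

theorem wmmse_weight_update_optimal {d : ℕ}
    (E : Matrix (Fin d) (Fin d) ℂ) (hE : E.PosDef) :
    ((E⁻¹ * E).trace.re - Real.log (E⁻¹.det.re) = d + Real.log E.det.re) ∧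
    (∀ W : Matrix (Fin d) (Fin d) ℂ, W.PosDef →
      d + Real.log E.det.re ≤ (W * E).trace.re - Real.log W.det.re) ∧
    (∀ W : Matrix (Fin d) (Fin d) ℂ, W.PosDef →
      (W * E).trace.re - Real.log W.det.re = d + Real.log E.det.re → W = E⁻¹) := by
  obtain ⟨R, hR, rfl⟩ := hE.exists_isUnit_eq_star_mul_self
  have hconj {W : Matrix (Fin d) (Fin d) ℂ} (hW : W.PosDef) : (R * W * star R).PosDef :=
    (IsUnit.posDef_star_right_conjugate_iff hR).2 hW
  refine ⟨?_, fun W hW => ?_, fun W hW hmin => ?_⟩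
  · rw [hE.trace_mul_re_sub_log_det_re_eq hE.inv, mul_inv_star_mul_self_mul_star hR]
    simp
  · have := (hconj hW).card_le_trace_re_sub_log_det_re
    rw [Fintype.card_fin] at this
    linarith [hE.trace_mul_re_sub_log_det_re_eq hW]
  · rw [hE.trace_mul_re_sub_log_det_re_eq hW, add_left_inj] at hmin
    refine eq_inv_star_mul_self_of_mul_mul_star_eq_one
      ((hconj hW).eq_one_of_trace_re_sub_log_det_re_eq_card ?_)
    rwa [Fintype.card_fin]
end

section
/- For any d×d positive definite Hermitian complex matrix E, the infimum over positive definite Hermitian d×d matrices W of Re(trace(W·E)) − Real.log((det W).re) equals d + Real.log((det E).re), and hence maximizing log det(E⁻¹) is equivalent to minimizing min_W [Re(trace(W·E)) − log det W]. -/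
open Matrix
open scoped ComplexOrder

/-!
Write `E = B Bᴴ` with `B` invertible. Then `tr (W E) - log det W = tr M - log det M + log det E`
for the positive definite matrix `M = Bᴴ W B`, and if `M` has eigenvalues `λᵢ > 0` then
`tr M - log det M = ∑ (λᵢ - log λᵢ) ≥ d` because `log λ ≤ λ - 1`. Equality holds at `W = E⁻¹`.
-/

namespace Matrix.PosDef

variable {n 𝕜 : Type*} [Fintype n] [DecidableEq n] [RCLike 𝕜] {A B E W : Matrix n n 𝕜}

lemma log_re_det_mul (hA : A.PosDef) (hB : B.PosDef) :
    Real.log (RCLike.re (A.det * B.det)) =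
      Real.log (RCLike.re A.det) + Real.log (RCLike.re B.det) := by
  obtain ⟨hA_re, hA_im⟩ := RCLike.pos_iff.mp hA.det_pos
  obtain ⟨hB_re, -⟩ := RCLike.pos_iff.mp hB.det_pos
  rw [RCLike.mul_re, hA_im, zero_mul, sub_zero, Real.log_mul hA_re.ne' hB_re.ne']

lemma card_le_re_trace_sub_log_re_det (hA : A.PosDef) :
    (Fintype.card n : ℝ) ≤ RCLike.re A.trace - Real.log (RCLike.re A.det) := by
  have hpos := hA.eigenvalues_pos
  rw [hA.isHermitian.trace_eq_sum_eigenvalues, hA.isHermitian.det_eq_prod_eigenvalues,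
    ← RCLike.ofReal_sum, ← RCLike.ofReal_prod, RCLike.ofReal_re, RCLike.ofReal_re,
    Real.log_prod fun i _ => (hpos i).ne', ← Finset.sum_sub_distrib, ← Finset.card_univ,
    ← nsmul_one, ← Finset.sum_const]
  exact Finset.sum_le_sum fun i _ => by linarith [Real.log_le_sub_one_of_pos (hpos i)]

open scoped MatrixOrder Matrix.Norms.L2Operator in
lemma card_add_log_re_det_le_re_trace_mul_sub_log_re_det (hW : W.PosDef) (hE : E.PosDef) :
    Fintype.card n + Real.log (RCLike.re E.det) ≤
      RCLike.re (W * E).trace - Real.log (RCLike.re W.det) := by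
  obtain ⟨B, hB, rfl⟩ := CStarAlgebra.isStrictlyPositive_iff_eq_mul_star_self.mp
    hE.isStrictlyPositive
  have hBWB : (star B * W * B).PosDef := (IsUnit.posDef_star_left_conjugate_iff hB).mpr hW
  have htrace : (star B * W * B).trace = (W * (B * star B)).trace := by
    rw [trace_mul_cycle, trace_mul_comm]
  have hdet : (star B * W * B).det = W.det * (B * star B).det := by
    rw [det_mul, det_mul, det_mul]; ring
  have hbound := hBWB.card_le_re_trace_sub_log_re_det
  rw [htrace, hdet, log_re_det_mul hW hE] at hbound
  linarith

lemma re_trace_inv_mul_sub_log_re_det_inv (hE : E.PosDef) :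
    RCLike.re (E⁻¹ * E).trace - Real.log (RCLike.re E⁻¹.det) =
      Fintype.card n + Real.log (RCLike.re E.det) := by
  have hinv : E⁻¹ * E = 1 := nonsing_inv_mul E <| (isUnit_iff_isUnit_det E).mp hE.isUnit
  have hmul : E⁻¹.det * E.det = 1 := by rw [← det_mul, hinv, det_one]
  have hlog := log_re_det_mul hE.inv hE
  rw [hmul, RCLike.one_re, Real.log_one] at hlog
  rw [hinv, trace_one, RCLike.natCast_re]
  linarith

end Matrix.PosDef

theorem rate_wmmse_equivalence {d : ℕ}
    (E : Matrix (Fin d) (Fin d) ℂ) (hE : E.PosDef) :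
    sInf {x : ℝ | ∃ W : Matrix (Fin d) (Fin d) ℂ, W.PosDef ∧
        x = (W * E).trace.re - Real.log W.det.re} =
      d + Real.log E.det.re := by
  refine IsLeast.csInf_eq ⟨⟨E⁻¹, hE.inv, ?_⟩, ?_⟩
  · simpa using hE.re_trace_inv_mul_sub_log_re_det_inv.symm
  · rintro x ⟨W, hW, rfl⟩
    simpa using hW.card_add_log_re_det_le_re_trace_mul_sub_log_re_det hE
end
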